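/- Let (Ω, 𝔉, μ) be a probability space, (E_m)_{m≥1} an i.i.d. sequence of exponential random variables with rate 1, and W = (2/π²) Σ_{m=1}^∞ E_m/(2m−1)². Then for every t ≥ 0, the moment generating function of W satisfies E[e^{−tW}] = 1/cosh(√(t/2)). -/

import Mathlib

open MeasureTheory ProbabilityTheory Real
open Set Filter Finset Topology

/-!
`W` is a series of independent exponential variables with weights `2 / (π² (2m+1)²)`, and
`E[e^{-sE}] = 1 / (1 + s)` for `E ~ Exp(1)`, so the Laplace transform of the partial sums of `W`
is `∏_{m<n} (1 + 2t / (π² (2m+1)²))⁻¹`. Since the weights are summable and `E` is integrable, the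
series converges almost surely, and dominated convergence (the integrands are bounded by `1`)
passes to the limit. Euler's product `cosh x = ∏ (1 + 4x² / (π² (2m+1)²))`, derived from the sine
product, identifies the limit as `1 / cosh √(t/2)`.
-/

lemma integral_expMeasure {r : ℝ} (hr : 0 ≤ r) (f : ℝ → ℝ) :
    ∫ x, f x ∂expMeasure r = ∫ x in Ioi 0, r * exp (-(r * x)) * f x := by
  rw [expMeasure, gammaMeasure, integral_withDensity_eq_integral_toReal_smul (f := gammaPDF 1 r)
      (measurable_gammaPDFReal 1 r).ennreal_ofReal (ae_of_all _ fun _ => ENNReal.ofReal_lt_top),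
    ← integral_Ici_eq_integral_Ioi, ← integral_indicator measurableSet_Ici]
  refine integral_congr_ae (ae_of_all _ fun x => ?_)
  by_cases hx : 0 ≤ x
  · simp [gammaPDF, gammaPDFReal, hx, indicator_of_mem, ENNReal.toReal_ofReal, hr, (exp_pos _).le]
  · simp [gammaPDF, gammaPDFReal, hx]

lemma mgf_id_expMeasure {r t : ℝ} (hr : 0 ≤ r) (ht : t < r) :
    mgf id (expMeasure r) t = r / (r - t) := by
  have hneg : t - r < 0 := by linarith
  calc mgf id (expMeasure r) t = ∫ x in Ioi 0, r * exp ((t - r) * x) := by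
        rw [mgf, integral_expMeasure hr]
        refine setIntegral_congr_fun measurableSet_Ioi fun x _ => ?_
        rw [id, mul_assoc, ← exp_add]
        ring_nf
    _ = r / (r - t) := by
        rw [integral_const_mul, integral_exp_mul_Ioi hneg, mul_zero, exp_zero, neg_div, ← div_neg,
          neg_sub, mul_one_div]

lemma integrable_id_expMeasure {r : ℝ} (hr : 0 < r) : Integrable id (expMeasure r) := by
  have hIio : Iio r ⊆ integrableExpSet id (expMeasure r) := fun t ht =>
    Integrable.of_integral_ne_zero <| by
      rw [← mgf, mgf_id_expMeasure hr.le ht]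
      exact (div_pos hr (sub_pos.2 ht)).ne'
  have h0 : (0 : ℝ) ∈ interior (integrableExpSet id (expMeasure r)) :=
    interior_mono hIio (by rwa [isOpen_Iio.interior_eq, Set.mem_Iio])
  exact memLp_one_iff_integrable.1 (memLp_of_mem_interior_integrableExpSet h0 1)

lemma ae_nonneg_expMeasure (r : ℝ) : ∀ᵐ x ∂expMeasure r, 0 ≤ x := by
  rw [ae_iff, expMeasure, gammaMeasure, withDensity_apply _ (by measurability)]
  simpa [not_le, ← Iio_def] using lintegral_gammaPDF_of_nonpos (a := 1) (r := r) le_rfl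

lemma prod_range_two_mul {M : Type*} [CommMonoid M] (f : ℕ → M) (n : ℕ) :
    ∏ j ∈ range (2 * n), f j = (∏ k ∈ range n, f (2 * k)) * ∏ k ∈ range n, f (2 * k + 1) := by
  induction n with
  | zero => simp
  | succ n ih =>
    rw [Nat.mul_succ, prod_range_succ, prod_range_succ, ih, prod_range_succ, prod_range_succ]
    ac_rfl

/-- Dividing Euler's sine product at `z` (its first `2n` factors) by the one at `z / 2` leaves the
odd factors, while `sin (π z) / (2 sin (π z / 2)) = cos (π z / 2)`. -/
theorem Complex.tendsto_euler_cos_prod {z : ℂ} (hz : Complex.sin (π * z / 2) ≠ 0) :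
    Tendsto (fun n : ℕ => ∏ k ∈ range n, (1 - z ^ 2 / (2 * (k : ℂ) + 1) ^ 2))
      atTop (𝓝 (Complex.cos (π * z / 2))) := by
  set S : ℂ → ℕ → ℂ := fun w n => π * w * ∏ j ∈ range n, (1 - w ^ 2 / ((j : ℂ) + 1) ^ 2)
  have hsin2 : Complex.sin (π * z) = 2 * Complex.sin (π * z / 2) * Complex.cos (π * z / 2) := by
    rw [← Complex.sin_two_mul, mul_div_cancel₀ _ two_ne_zero]
  have hnum : Tendsto (fun n => S z (2 * n)) atTop (𝓝 (Complex.sin (π * z))) :=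
    (Complex.tendsto_euler_sin_prod z).comp (tendsto_id.const_mul_atTop' two_pos)
  have hden : Tendsto (fun n => 2 * S (z / 2) n) atTop (𝓝 (2 * Complex.sin (π * z / 2))) := by
    simpa only [mul_div_assoc] using (Complex.tendsto_euler_sin_prod (z / 2)).const_mul 2
  have hden_ne : 2 * Complex.sin (π * z / 2) ≠ 0 := mul_ne_zero two_ne_zero hz
  have hsplit : ∀ n, S z (2 * n) = (∏ k ∈ range n, (1 - z ^ 2 / (2 * (k : ℂ) + 1) ^ 2)) *
      (2 * S (z / 2) n) := fun n => by
    simp only [S, prod_range_two_mul]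
    push_cast
    have : ∀ k : ℕ, (1 : ℂ) - z ^ 2 / (2 * k + 1 + 1) ^ 2 = 1 - (z / 2) ^ 2 / (k + 1) ^ 2 :=
      fun k => by rw [div_pow, div_div]; ring
    simp only [this]
    ring
  have := hnum.div hden hden_ne
  rw [hsin2, mul_div_cancel_left₀ _ hden_ne] at this
  refine this.congr' ?_
  filter_upwards [hden.eventually_ne hden_ne] with n hn
  rw [Pi.div_apply, hsplit, mul_div_cancel_right₀ _ hn]

theorem Real.tendsto_euler_cosh_prod (x : ℝ) :
    Tendsto (fun n : ℕ => ∏ k ∈ range n, (1 + (2 * x / π) ^ 2 / (2 * (k : ℝ) + 1) ^ 2))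
      atTop (𝓝 (cosh x)) := by
  rcases eq_or_ne x 0 with rfl | hx
  · simp
  set z : ℂ := 2 * x / π * Complex.I
  have hz : π * z / 2 = x * Complex.I := by
    simp only [z]; field_simp
  have hsin : Complex.sin (π * z / 2) ≠ 0 := by
    rw [hz, Complex.sin_mul_I, ← Complex.ofReal_sinh]
    exact mul_ne_zero (Complex.ofReal_ne_zero.2 (sinh_ne_zero.2 hx)) Complex.I_ne_zero
  have := Complex.tendsto_euler_cos_prod hsin
  rw [hz, Complex.cos_mul_I, ← Complex.ofReal_cosh] at this
  refine tendsto_ofReal_iff.1 (this.congr fun n => ?_)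
  push_cast
  refine prod_congr rfl fun k _ => ?_
  simp only [z, mul_pow, Complex.I_sq]
  ring

section Series

variable {Ω : Type*} [MeasurableSpace Ω] {μ : Measure Ω}

lemma ae_summable_mul_of_map_eq {ν : Measure ℝ} (hν : Integrable id ν) {Y : ℕ → Ω → ℝ}
    (hY : ∀ m, AEMeasurable (Y m) μ) (hmap : ∀ m, μ.map (Y m) = ν) {c : ℕ → ℝ}
    (hc : Summable c) : ∀ᵐ ω ∂μ, Summable fun m => c m * Y m ω := by
  have hnorm : ∀ m, eLpNorm (c m • Y m) 1 μ = ‖c m‖ₑ * eLpNorm id 1 ν := fun m => by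
    rw [eLpNorm_const_smul, ← hmap m, eLpNorm_map_measure aestronglyMeasurable_id (hY m)]
    rfl
  have hfin : ∑' m, eLpNorm (c m • Y m) 1 μ ≠ ⊤ := by
    simp only [hnorm, ENNReal.tsum_mul_right]
    exact ENNReal.mul_ne_top (tsum_enorm_ne_top_iff_summable_norm.2 hc.norm)
      (memLp_one_iff_integrable.2 hν).eLpNorm_ne_top
  filter_upwards [summable_norm_of_tsum_eLpNorm_ne_top le_rfl
    (fun m => ((hY m).const_smul (c m)).aestronglyMeasurable) hfin] with ω hω
  exact hω.of_norm

lemma tendsto_mgf_sum_range [IsFiniteMeasure μ] {X : ℕ → Ω → ℝ}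
    (hX : ∀ m, AEMeasurable (X m) μ) (hX0 : ∀ᵐ ω ∂μ, ∀ m, 0 ≤ X m ω)
    (hsum : ∀ᵐ ω ∂μ, Summable fun m => X m ω) {t : ℝ} (ht : t ≤ 0) :
    Tendsto (fun n => mgf (∑ m ∈ range n, X m) μ t) atTop
      (𝓝 (mgf (fun ω => ∑' m, X m ω) μ t)) := by
  simp only [mgf, Finset.sum_apply]
  refine tendsto_integral_of_dominated_convergence (fun _ => 1) (fun n => ?_)
    (integrable_const 1) (fun n => ?_) ?_
  · fun_prop
  · filter_upwards [hX0] with ω hω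
    rw [norm_of_nonneg (exp_pos _).le, exp_le_one_iff]
    exact mul_nonpos_of_nonpos_of_nonneg ht (sum_nonneg fun m _ => hω m)
  · filter_upwards [hsum] with ω hω
    exact ((continuous_const.mul continuous_id).rexp.tendsto _).comp hω.hasSum.tendsto_sum_nat

end Series

lemma summable_inv_two_mul_add_one_sq : Summable fun m : ℕ => ((2 * (m : ℝ) + 1) ^ 2)⁻¹ := by
  have := (Real.summable_nat_pow_inv.2 one_lt_two).comp_injective
    (i := fun m : ℕ => 2 * m + 1) fun a b h => by simpa using h
  simpa [Function.comp_def] using this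

/-- Let `(E_m)` be i.i.d. exponential rate-1 random variables on a probability space and
`W = (2 / π²) ∑' m, E m / (2m + 1)²` (the PG(1,0) random variable). Then for every `t ≥ 0`,
the moment generating function of `W` satisfies `E[exp (-t W)] = 1 / cosh (√(t / 2))`. -/
theorem pg_mgf_eq_one_div_cosh
    {Ω : Type*} [MeasurableSpace Ω] (μ : Measure Ω) [IsProbabilityMeasure μ]
    (E : ℕ → Ω → ℝ) (hmeas : ∀ m, Measurable (E m))
    (hindep : iIndepFun E μ)
    (hdist : ∀ m, μ.map (E m) = expMeasure 1)
    (t : ℝ) (ht : 0 ≤ t) :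
    ∫ ω, Real.exp (-t * ((2 / π ^ 2) * ∑' m : ℕ, E m ω / (2 * (m : ℝ) + 1) ^ 2)) ∂μ
      = 1 / Real.cosh (Real.sqrt (t / 2)) := by
  set a := (2 * √(t / 2) / π) ^ 2 with ha_def
  have ha : 0 ≤ a := sq_nonneg _
  have ha_eq : a = 2 * t / π ^ 2 := by
    rw [ha_def, div_pow, mul_pow, sq_sqrt (by positivity)]
    ring
  set X : ℕ → Ω → ℝ := fun m ω => ((2 * (m : ℝ) + 1) ^ 2)⁻¹ * E m ω
  have hXmeas : ∀ m, Measurable (X m) := fun m => (hmeas m).const_mul _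
  have hX0 : ∀ᵐ ω ∂μ, ∀ m, 0 ≤ X m ω := ae_all_iff.2 fun m =>
    (ae_of_ae_map (hmeas m).aemeasurable ((hdist m).symm ▸ ae_nonneg_expMeasure 1)).mono
      fun ω hω => by positivity
  have hXsum : ∀ᵐ ω ∂μ, Summable fun m => X m ω :=
    ae_summable_mul_of_map_eq (integrable_id_expMeasure one_pos) (fun m => (hmeas m).aemeasurable)
      hdist summable_inv_two_mul_add_one_sq
  have hfactor : ∀ m : ℕ, mgf (X m) μ (-a) = (1 + a / (2 * (m : ℝ) + 1) ^ 2)⁻¹ := fun m => by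
    have hlt : ((2 * (m : ℝ) + 1) ^ 2)⁻¹ * -a < 1 :=
      (mul_nonpos_of_nonneg_of_nonpos (by positivity) (neg_nonpos.2 ha)).trans_lt one_pos
    rw [mgf_const_mul, ← mgf_id_map (hmeas m).aemeasurable, hdist m,
      mgf_id_expMeasure zero_le_one hlt, one_div, mul_neg, sub_neg_eq_add, inv_mul_eq_div]
  have hXindep : iIndepFun X μ := hindep.comp _ fun m => measurable_const_mul _
  convert tendsto_nhds_unique (tendsto_mgf_sum_range (fun m => (hXmeas m).aemeasurable) hX0 hXsum
    (neg_nonpos.2 ha)) ?_ using 1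
  · simp only [mgf, X, inv_mul_eq_div, ha_eq]
    exact integral_congr_ae (ae_of_all _ fun ω => by ring_nf)
  · simp only [hXindep.mgf_sum hXmeas, hfactor, prod_inv_distrib, one_div]
    exact (Real.tendsto_euler_cosh_prod (√(t / 2))).inv₀ (cosh_pos _).ne'
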